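/- Let u : ℝ → ℝ be twice differentiable with u(0) = 0 and u'(0) = 0, and suppose u''(t) - u(t) = f(t) where |f(t)| ≤ k for all t ≥ 0. Then |u(t)| ≤ k(cosh t - 1) for all t ≥ 0. -/

import Mathlib

open MeasureTheory

/-- Scalar ODE comparison: if `u'' - u = f` with `|f| ≤ k` on `[0,∞)` and
`u 0 = 0`, `u' 0 = 0`, then `|u t| ≤ k (cosh t - 1)` for `t ≥ 0`. -/
theorem stmt0 (u u' u'' f : ℝ → ℝ) (k : ℝ)
    (hu : ∀ t, HasDerivAt u (u' t) t)
    (hu' : ∀ t, HasDerivAt u' (u'' t) t)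
    (h0 : u 0 = 0) (h0' : u' 0 = 0)
    (hode : ∀ t, u'' t - u t = f t)
    (hf : ∀ t, 0 ≤ t → |f t| ≤ k) :
    ∀ t, 0 ≤ t → |u t| ≤ k * (Real.cosh t - 1) := by
  intro t ht
  have hk0 : 0 ≤ k := le_trans (abs_nonneg _) (hf 0 le_rfl)
  have hucont : Continuous u := continuous_iff_continuousAt.2 fun x => (hu x).continuousAt
  have hmeas : Measurable f := by
    have hfe : f = fun s => deriv u' s - u s := by
      funext s
      rw [(hu' s).deriv, hode]
    rw [hfe]
    exact (measurable_deriv u').sub hucont.measurable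
  have hfi : IntervalIntegrable f volume 0 t := by
    rw [intervalIntegrable_iff_integrableOn_Ioc_of_le ht]
    apply Measure.integrableOn_of_bounded measure_Ioc_lt_top.ne hmeas.aestronglyMeasurable
    filter_upwards [ae_restrict_mem measurableSet_Ioc] with s hs
    exact hf s hs.1.le
  set A : ℝ → ℝ := fun s => u' s * Real.cosh s - u s * Real.sinh s with hAdef
  set B : ℝ → ℝ := fun s => u' s * Real.sinh s - u s * Real.cosh s with hBdef
  have hA : ∀ s, HasDerivAt A (f s * Real.cosh s) s := fun s => by
    have h1 := ((hu' s).mul (Real.hasDerivAt_cosh s)).sub ((hu s).mul (Real.hasDerivAt_sinh s))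
    exact h1.congr_deriv (by rw [← hode s]; ring)
  have hB : ∀ s, HasDerivAt B (f s * Real.sinh s) s := fun s => by
    have h1 := ((hu' s).mul (Real.hasDerivAt_sinh s)).sub ((hu s).mul (Real.hasDerivAt_cosh s))
    exact h1.congr_deriv (by rw [← hode s]; ring)
  have hiA : IntervalIntegrable (fun s => f s * Real.cosh s) volume 0 t :=
    hfi.mul_continuousOn Real.continuous_cosh.continuousOn
  have hiB : IntervalIntegrable (fun s => f s * Real.sinh s) volume 0 t :=
    hfi.mul_continuousOn Real.continuous_sinh.continuousOn
  have hIA : ∫ s in (0:ℝ)..t, f s * Real.cosh s = A t := by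
    have h2 := intervalIntegral.integral_eq_sub_of_hasDerivAt (fun s _ => hA s) hiA
    simpa [hAdef, h0, h0'] using h2
  have hIB : ∫ s in (0:ℝ)..t, f s * Real.sinh s = B t := by
    have h2 := intervalIntegral.integral_eq_sub_of_hasDerivAt (fun s _ => hB s) hiB
    simpa [hBdef, h0, h0'] using h2
  have hrep : u t = ∫ s in (0:ℝ)..t, f s * Real.sinh (t - s) := by
    have e1 : Real.sinh t * ∫ s in (0:ℝ)..t, f s * Real.cosh s
        = ∫ s in (0:ℝ)..t, Real.sinh t * (f s * Real.cosh s) :=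
      (intervalIntegral.integral_const_mul _ _).symm
    have e2 : Real.cosh t * ∫ s in (0:ℝ)..t, f s * Real.sinh s
        = ∫ s in (0:ℝ)..t, Real.cosh t * (f s * Real.sinh s) :=
      (intervalIntegral.integral_const_mul _ _).symm
    have hlin : ∫ s in (0:ℝ)..t, f s * Real.sinh (t - s)
        = Real.sinh t * (∫ s in (0:ℝ)..t, f s * Real.cosh s)
          - Real.cosh t * ∫ s in (0:ℝ)..t, f s * Real.sinh s := by
      rw [e1, e2, ← intervalIntegral.integral_sub (hiA.const_mul _) (hiB.const_mul _)]
      congr 1; funext s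
      rw [Real.sinh_sub]; ring
    have hpyth := Real.cosh_sq_sub_sinh_sq t
    have hAB : u t = Real.sinh t * A t - Real.cosh t * B t := by
      simp only [hAdef, hBdef]
      linear_combination (-(u t)) * hpyth
    rw [hAB, ← hIA, ← hIB]
    exact hlin.symm
  -- compute the comparison integral
  have hderivF : ∀ s : ℝ, HasDerivAt (fun x => -(k * Real.cosh (t - x)))
      (k * Real.sinh (t - s)) s := by
    intro s
    have h1 : HasDerivAt (fun x : ℝ => t - x) (-1) s := (hasDerivAt_id s).const_sub t
    have h2 := (Real.hasDerivAt_cosh (t - s)).comp s h1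
    have h3 := (h2.const_mul k).neg
    exact h3.congr_deriv (by ring)
  have hgcont : Continuous (fun s => k * Real.sinh (t - s)) :=
    continuous_const.mul (Real.continuous_sinh.comp (continuous_const.sub continuous_id))
  have hval : ∫ s in (0:ℝ)..t, k * Real.sinh (t - s) = k * (Real.cosh t - 1) := by
    rw [intervalIntegral.integral_eq_sub_of_hasDerivAt (fun s _ => hderivF s)
      (hgcont.intervalIntegrable 0 t)]
    simp [Real.cosh_zero]
    ring
  have hbound : ∀ᵐ s ∂(volume.restrict (Set.uIoc 0 t)),
      ‖f s * Real.sinh (t - s)‖ ≤ k * Real.sinh (t - s) := by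
    rw [Set.uIoc_of_le ht]
    filter_upwards [ae_restrict_mem measurableSet_Ioc] with s hs
    have h1 : 0 ≤ Real.sinh (t - s) := Real.sinh_nonneg_iff.2 (by linarith [hs.2])
    rw [Real.norm_eq_abs, abs_mul, abs_of_nonneg h1]
    exact mul_le_mul_of_nonneg_right (hf s hs.1.le) h1
  have hfin := intervalIntegral.norm_integral_le_abs_of_norm_le hbound (hgcont.intervalIntegrable 0 t)
  rw [hval] at hfin
  rw [hrep]
  calc |∫ s in (0:ℝ)..t, f s * Real.sinh (t - s)| ≤ |k * (Real.cosh t - 1)| := hfin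
    _ = k * (Real.cosh t - 1) := abs_of_nonneg (by nlinarith [Real.one_le_cosh t])
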